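/- Let c₀, c₁ be real constants and set α = c₁²/4 − c₀. If ρ : ℝ → ℝ is a non-constant differentiable function satisfying the ODE ρ'(t) = ρ(t)² + c₁ρ(t) + c₀ for all t ∈ ℝ, then α > 0 and there exists d ∈ ℝ such that ρ(t) = −c₁/2 − √α·tanh(√α(t+d)) for all t. -/

import Mathlib

/-!
After the shift `f = ρ + c₁/2` the equation becomes `f' = f² - α`. A global solution can never
exceed `√α` (or `0` if `α < 0`): from such a value it keeps increasing with `f' ≥ c f²` for some
`c > 0`, so `1 / f` reaches `0` in finite time. Applied also to `t ↦ -f (-t)`, this forces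
`α ≥ 0` and `f² ≤ α`. On `[-√α, √α]` the right-hand side is Lipschitz, so solutions are
determined by one value: `f(0) = ±√α` would give a constant solution, hence `f(0)² < α`, and
then `f` is the translate of `-√α tanh(√α t)` taking the value `f(0)` at `0`.
-/

open Set Real

lemma Real.hasDerivAt_tanh (x : ℝ) : HasDerivAt tanh (1 - tanh x ^ 2) x := by
  have h := (hasDerivAt_sinh x).div (hasDerivAt_cosh x) (cosh_pos x).ne'
  rw [show sinh / cosh = tanh from funext fun y => (tanh_eq_sinh_div_cosh y).symm] at h
  refine h.congr_deriv ?_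
  rw [tanh_eq_sinh_div_cosh]
  field_simp

lemma nonpos_of_mul_sq_le_deriv {f f' : ℝ → ℝ} {c t₀ : ℝ} (hc : 0 < c)
    (hf : ∀ t ≥ t₀, HasDerivAt f (f' t) t) (hle : ∀ t ≥ t₀, c * f t ^ 2 ≤ f' t) :
    f t₀ ≤ 0 := by
  by_contra! h₀
  have hcont : ContinuousOn f (Ici t₀) := fun t ht => (hf t ht).continuousAt.continuousWithinAt
  have hmono : MonotoneOn f (Ici t₀) := by
    refine monotoneOn_of_hasDerivWithinAt_nonneg (convex_Ici t₀) hcont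
      (fun t ht => (hf t (interior_subset ht)).hasDerivWithinAt) fun t ht => ?_
    exact (by positivity : 0 ≤ c * f t ^ 2).trans (hle t (interior_subset ht))
  have hpos : ∀ t ≥ t₀, 0 < f t := fun t ht => h₀.trans_le (hmono self_mem_Ici ht ht)
  have hψ : ∀ t ≥ t₀, HasDerivAt (fun t => c * t + (f t)⁻¹) (c - f' t / f t ^ 2) t := by
    intro t ht
    refine (((hasDerivAt_id' t).const_mul c).add ((hf t ht).inv (hpos t ht).ne')).congr_deriv ?_
    ring
  -- `c t + 1 / f t` cannot increase, so `1 / f` would have to vanish by time `t₀ + 1 / (c f t₀)`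
  have hanti : AntitoneOn (fun t => c * t + (f t)⁻¹) (Ici t₀) := by
    refine antitoneOn_of_hasDerivWithinAt_nonpos (convex_Ici t₀)
      (fun t ht => (hψ t ht).continuousAt.continuousWithinAt)
      (fun t ht => (hψ t (interior_subset ht)).hasDerivWithinAt) fun t ht => ?_
    have ht := interior_subset ht
    have := hpos t ht
    rw [sub_nonpos, le_div_iff₀ (by positivity)]
    exact hle t ht
  set T := t₀ + (c * f t₀)⁻¹
  have hT : t₀ ≤ T := le_add_of_nonneg_right (by positivity)
  have hle_T := hanti self_mem_Ici hT hT
  have hcT : c * T = c * t₀ + (f t₀)⁻¹ := by simp only [T]; field_simp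
  simp only [hcT] at hle_T
  linarith [inv_pos.2 (hpos T hT)]

lemma lipschitzOnWith_sq_sub_const (α R : ℝ) :
    LipschitzOnWith (2 * R).toNNReal (fun x : ℝ => x ^ 2 - α) (Icc (-R) R) := by
  refine LipschitzOnWith.of_dist_le_mul fun x hx y hy => ?_
  have hxy : |x + y| ≤ 2 * R := by
    rw [abs_le]; constructor <;> linarith [hx.1, hx.2, hy.1, hy.2]
  rw [Real.dist_eq, Real.dist_eq, show x ^ 2 - α - (y ^ 2 - α) = (x + y) * (x - y) by ring,
    abs_mul, Real.coe_toNNReal _ ((abs_nonneg _).trans hxy)]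
  exact mul_le_mul_of_nonneg_right hxy (abs_nonneg _)

def IsRiccatiSolution (α : ℝ) (f : ℝ → ℝ) : Prop :=
  ∀ t, HasDerivAt f (f t ^ 2 - α) t

lemma isRiccatiSolution_neg_mul_tanh (r d : ℝ) :
    IsRiccatiSolution (r ^ 2) (fun t => -(r * tanh (r * (t + d)))) := fun t => by
  have hlin : HasDerivAt (fun t => r * (t + d)) r t := by
    simpa using ((hasDerivAt_id' t).add_const d).const_mul r
  refine (((hasDerivAt_tanh _).comp t hlin).const_mul r).neg.congr_deriv ?_
  ring

namespace IsRiccatiSolution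

variable {α : ℝ} {f g : ℝ → ℝ}

lemma comp_neg (hf : IsRiccatiSolution α f) : IsRiccatiSolution α (fun t => -f (-t)) :=
  fun t => ((hf (-t)).comp t (hasDerivAt_neg t)).neg.congr_deriv (by ring)

lemma le_of_lt_sq_of_le (hf : IsRiccatiSolution α f) {a t₀ t : ℝ} (ha : α < a ^ 2)
    (h₀ : a ≤ f t₀) (ht : t₀ ≤ t) : a ≤ f t :=
  image_le_of_deriv_right_lt_deriv_boundary (f' := 0) continuousOn_const
    (fun _ _ => hasDerivWithinAt_const _ _ _) h₀ hf
    (fun s _ hs => by simpa [← hs] using ha) ⟨ht, le_rfl⟩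

lemma nonpos_or_sq_le (hf : IsRiccatiSolution α f) (t₀ : ℝ) : f t₀ ≤ 0 ∨ f t₀ ^ 2 ≤ α := by
  by_contra! ⟨h₀, hα⟩
  set a := f t₀
  have hge : ∀ t ≥ t₀, a ≤ f t := fun t ht => hf.le_of_lt_sq_of_le hα le_rfl ht
  have hc : 0 < 1 - max α 0 / a ^ 2 := by
    rw [sub_pos, div_lt_one (by positivity)]
    exact max_lt hα (by positivity)
  -- on `f ≥ a` one has `f² - α ≥ f² - max α 0 ≥ (1 - max α 0 / a²) f²`
  refine h₀.not_ge (nonpos_of_mul_sq_le_deriv hc (fun t _ => hf t) fun t ht => ?_)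
  have hsq : a ^ 2 ≤ f t ^ 2 := pow_le_pow_left₀ h₀.le (hge t ht) 2
  have hmax : max α 0 ≤ max α 0 / a ^ 2 * f t ^ 2 := by
    rw [div_mul_eq_mul_div, le_div_iff₀ (by positivity)]
    exact mul_le_mul_of_nonneg_left hsq (le_max_right _ _)
  nlinarith [le_max_left α 0]

lemma sq_le (hf : IsRiccatiSolution α f) (t : ℝ) : f t ^ 2 ≤ α := by
  have hzero : ∀ t, f t ^ 2 ≤ α ∨ f t = 0 := by
    intro t
    have := hf.comp_neg.nonpos_or_sq_le (-t)
    simp only [neg_neg, neg_nonpos, neg_sq] at this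
    rcases hf.nonpos_or_sq_le t with h | h <;> grind
  have hα : 0 ≤ α := by
    by_contra! hα
    have hf0 : f = 0 := funext fun t => (hzero t).resolve_left (by nlinarith)
    have h := hf 0
    rw [hf0] at h
    have := h.unique (hasDerivAt_const 0 0)
    simp only [Pi.zero_apply] at this
    linarith
  rcases hzero t with h | h
  · exact h
  · simpa [h] using hα

lemma eq_of_abs_le {R t₀ : ℝ} (hf : IsRiccatiSolution α f) (hg : IsRiccatiSolution α g)
    (hfR : ∀ t, |f t| ≤ R) (hgR : ∀ t, |g t| ≤ R) (h : f t₀ = g t₀) : f = g :=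
  ODE_solution_unique_univ (v := fun _ x => x ^ 2 - α) (s := fun _ => Icc (-R) R)
    (fun _ => lipschitzOnWith_sq_sub_const α R) (fun t => ⟨hf t, abs_le.1 (hfR t)⟩)
    (fun t => ⟨hg t, abs_le.1 (hgR t)⟩) h

lemma eq_const_of_sq_eq {t₀ : ℝ} (hf : IsRiccatiSolution α f) (h : f t₀ ^ 2 = α) (t : ℝ) :
    f t = f t₀ :=
  have hfR : ∀ t, |f t| ≤ √α := fun t => abs_le_sqrt (hf.sq_le t)
  congrFun (hf.eq_of_abs_le (g := fun _ => f t₀)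
    (fun _ => (hasDerivAt_const _ _).congr_deriv (by rw [h, sub_self])) hfR (fun _ => hfR t₀)
    rfl) t

lemma sq_lt_of_not_const (hf : IsRiccatiSolution α f) (hnc : ¬ ∃ c, ∀ t, f t = c) (t : ℝ) :
    f t ^ 2 < α :=
  (hf.sq_le t).lt_of_ne fun h => hnc ⟨f t, hf.eq_const_of_sq_eq h⟩

lemma eq_neg_sqrt_mul_tanh (hf : IsRiccatiSolution α f) (h : f 0 ^ 2 < α) :
    ∃ d, ∀ t, f t = -(√α * tanh (√α * (t + d))) := by
  have hα : 0 < α := (sq_nonneg _).trans_lt h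
  have hr : 0 < √α := sqrt_pos.2 hα
  have hy : -f 0 / √α ∈ Ioo (-1) 1 := by
    obtain ⟨h₁, h₂⟩ := sq_lt.1 h
    constructor
    · rw [lt_div_iff₀ hr]; linarith
    · rw [div_lt_one hr]; linarith
  set d := artanh (-f 0 / √α) / √α
  have hw := isRiccatiSolution_neg_mul_tanh (√α) d
  rw [sq_sqrt hα.le] at hw
  refine ⟨d, congrFun (hf.eq_of_abs_le hw (fun t => abs_le_sqrt (hf.sq_le t)) (fun t => ?_)
    (t₀ := 0) ?_)⟩
  · rw [abs_neg, abs_mul, abs_of_pos hr]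
    exact mul_le_of_le_one_right hr.le (abs_tanh_lt_one _).le
  · simp only [d, zero_add, mul_div_cancel₀ _ hr.ne', tanh_artanh hy]
    field_simp

end IsRiccatiSolution

/-- If `ρ : ℝ → ℝ` is a non-constant differentiable function satisfying
`ρ'(t) = ρ(t)² + c₁ρ(t) + c₀` for all `t ∈ ℝ`, then `α = c₁²/4 − c₀ > 0` and
there is a `d ∈ ℝ` with `ρ(t) = −c₁/2 − √α·tanh(√α(t+d))` for all `t`. -/
theorem riccati_global_solutions (c₀ c₁ : ℝ) (ρ : ℝ → ℝ)
    (hode : ∀ t : ℝ, HasDerivAt ρ (ρ t ^ 2 + c₁ * ρ t + c₀) t)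
    (hnc : ¬ ∃ c : ℝ, ∀ t, ρ t = c) :
    0 < c₁ ^ 2 / 4 - c₀ ∧
      ∃ d : ℝ, ∀ t : ℝ,
        ρ t = -c₁ / 2 - Real.sqrt (c₁ ^ 2 / 4 - c₀)
            * Real.tanh (Real.sqrt (c₁ ^ 2 / 4 - c₀) * (t + d)) := by
  set α := c₁ ^ 2 / 4 - c₀
  set f : ℝ → ℝ := fun t => ρ t + c₁ / 2
  have hf : IsRiccatiSolution α f := fun t =>
    ((hode t).add_const (c₁ / 2)).congr_deriv (by simp only [f, α]; ring)
  have hnc' : ¬ ∃ c, ∀ t, f t = c := fun ⟨c, hc⟩ =>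
    hnc ⟨c - c₁ / 2, fun t => by linarith [show ρ t + c₁ / 2 = c from hc t]⟩
  have hlt := hf.sq_lt_of_not_const hnc' 0
  obtain ⟨d, hd⟩ := hf.eq_neg_sqrt_mul_tanh hlt
  exact ⟨(sq_nonneg _).trans_lt hlt, d, fun t => by
    linarith [show ρ t + c₁ / 2 = _ from hd t]⟩
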